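/- Let K be a finite simplicial complex. There exists a function θ: K_q → {1,−1} with θ(τ̄) = θ(τ) for all τ ∈ K_q such that S^θ ∘ D_q^down ∘ S^θ = −D_q^down (where S^θ is the operator of multiplication by θ on ℓ²(K_q)) if and only if the down graph Y_q is bipartite. Consequently, if Y_q is bipartite, then the set of eigenvalues of D_q^down is symmetric about the origin. -/

import Mathlib

open scoped BigOperators

/-- The set of oriented `q`-simplices of a simplicial complex, together with the
orientation-reversal involution `bar` (writing `τ̄` for `bar τ`). -/
structure OrientedSet where
  K : Type
  bar : K → K
  bar_invol : ∀ τ, bar (bar τ) = τ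
  bar_ne : ∀ τ, bar τ ≠ τ

/-- The data of an up graph (`mult = 2(q+1)`) or a down graph (`mult = 2`) on the set of
oriented `q`-simplices: the sign function `η` (extended by `0` off the edge set, so that
`(τ₁, τ₂)` is an edge iff `eta τ₁ τ₂ ≠ 0`), the degree function (`deg_X`, resp. `deg_Y`),
and local finiteness; the degree of a vertex `τ` in the graph is `mult * deg τ`. -/
structure GroverStructure (O : OrientedSet) where
  eta : O.K → O.K → ℝ
  eta_symm : ∀ τ₁ τ₂, eta τ₁ τ₂ = eta τ₂ τ₁
  eta_vals : ∀ τ₁ τ₂, eta τ₁ τ₂ = 0 ∨ eta τ₁ τ₂ = 1 ∨ eta τ₁ τ₂ = -1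
  eta_bar_left : ∀ τ₁ τ₂, eta (O.bar τ₁) τ₂ = - eta τ₁ τ₂
  eta_self : ∀ τ, eta τ τ = 0
  eta_bar_self : ∀ τ, eta τ (O.bar τ) = 0
  deg : O.K → ℕ
  deg_pos : ∀ τ, 0 < deg τ
  deg_bar : ∀ τ, deg (O.bar τ) = deg τ
  mult : ℕ
  nbhdFinite : ∀ τ, {τ' | eta τ τ' ≠ 0}.Finite
  nbhd_card : ∀ τ, (nbhdFinite τ).toFinset.card = mult * deg τ

namespace GroverStructure

variable {O : OrientedSet} (Y : GroverStructure O)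

/-- `(τ₁, τ₂)` is an oriented edge of the up/down graph. -/
def Edge (τ₁ τ₂ : O.K) : Prop := Y.eta τ₁ τ₂ ≠ 0

/-- The normalization constant `(mult * deg τ)^(-1/2)`. -/
noncomputable def c (τ : O.K) : ℂ := ((Real.sqrt (Y.mult * Y.deg τ) : ℝ) : ℂ)⁻¹

/-- The operator `d : ℓ²(E) → ℓ²(K)`; elements of `ℓ²(E)` are represented as
functions on `K × K` (supported on the set of edges). -/
noncomputable def d (g : O.K × O.K → ℂ) : O.K → ℂ :=
  fun τ => Y.c τ * ∑ᶠ τ' ∈ {τ' | Y.eta τ τ' ≠ 0}, g (τ, τ')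

/-- The adjoint `d* : ℓ²(K) → ℓ²(E)`. -/
noncomputable def dstar (f : O.K → ℂ) : O.K × O.K → ℂ :=
  fun p => if Y.eta p.1 p.2 ≠ 0 then Y.c p.1 * f p.1 else 0

/-- The shift operator `(S g)(τ₁,τ₂) = η(τ₁,τ₂) • g(τ₂,τ₁)`. -/
noncomputable def shift (g : O.K × O.K → ℂ) : O.K × O.K → ℂ :=
  fun p => (Y.eta p.1 p.2 : ℂ) * g (p.2, p.1)

/-- The discriminant operator `D = d ∘ S ∘ d*`. -/
noncomputable def disc (f : O.K → ℂ) : O.K → ℂ := Y.d (Y.shift (Y.dstar f))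

/-- The Grover walk `U = S (2 d* d − I)`. -/
noncomputable def walk (g : O.K × O.K → ℂ) : O.K × O.K → ℂ :=
  Y.shift (fun p => 2 * Y.dstar (Y.d g) p - g p)

/-- Membership in `ℓ²(E)`: square summable and supported on the edge set. -/
def MemEdge (g : O.K × O.K → ℂ) : Prop :=
  Memℓp g 2 ∧ ∀ p : O.K × O.K, ¬ Y.Edge p.1 p.2 → g p = 0

end GroverStructure

/-- The orthogonal projection of `ℓ²(K_q)` onto the cochain space
`C^q(K,ℂ) = {f : f(τ̄) = -f(τ)}`. -/
noncomputable def projC (O : OrientedSet) (f : O.K → ℂ) : O.K → ℂ :=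
  fun τ => (f τ - f (O.bar τ)) / 2

/-- The down graph `Y_q` is bipartite: `K_q` splits as a disjoint union `A ∪ B` and every
edge joins a vertex of `A` to a vertex of `B`. -/
def GroverStructure.Bipartite {O : OrientedSet} (Y : GroverStructure O) : Prop :=
  ∃ A B : Set O.K, A ∪ B = Set.univ ∧ A ∩ B = ∅ ∧
    ∀ τ τ', Y.eta τ τ' ≠ 0 → ((τ ∈ A ∧ τ' ∈ B) ∨ (τ ∈ B ∧ τ' ∈ A))

/-! A switching function must flip sign across every edge, and a sign alternating across
every edge is exactly a 2-colouring of the down graph. Such a colouring can always be chosen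
invariant under `τ ↦ τ̄`, because `τ` and `τ̄` have the same neighbours: colour a vertex `1`
when it has a neighbour in the second class. Conjugating by the sign operator then carries
the `μ`-eigenspace of `D` onto its `-μ`-eigenspace. -/

namespace GroverStructure

variable {O : OrientedSet} (Y : GroverStructure O)

noncomputable abbrev nbhd (τ : O.K) : Finset O.K := (Y.nbhdFinite τ).toFinset

lemma mem_nbhd {τ τ' : O.K} : τ' ∈ Y.nbhd τ ↔ Y.eta τ τ' ≠ 0 := by
  simp

lemma eta_bar_left_ne_zero_iff (τ σ : O.K) : Y.eta (O.bar τ) σ ≠ 0 ↔ Y.eta τ σ ≠ 0 := by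
  rw [Y.eta_bar_left, neg_ne_zero]

lemma c_ne_zero_of_eta_ne_zero {τ τ' : O.K} (h : Y.eta τ τ' ≠ 0) : Y.c τ ≠ 0 := by
  have hpos : 0 < Y.mult * Y.deg τ := by
    rw [← Y.nbhd_card]
    exact Finset.card_pos.mpr ⟨τ', Y.mem_nbhd.mpr h⟩
  have hpos' : (0 : ℝ) < Y.mult * Y.deg τ := by exact_mod_cast hpos
  unfold c
  exact inv_ne_zero (Complex.ofReal_ne_zero.mpr (Real.sqrt_pos.mpr hpos').ne')

lemma disc_apply (f : O.K → ℂ) (τ : O.K) :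
    Y.disc f τ = Y.c τ * ∑ τ' ∈ Y.nbhd τ, (Y.eta τ τ' : ℂ) * (Y.c τ' * f τ') := by
  unfold disc d shift dstar
  rw [finsum_mem_eq_finite_toFinset_sum _ (Y.nbhdFinite τ)]
  refine congrArg _ (Finset.sum_congr rfl fun τ' hτ' => ?_)
  rw [if_pos (by rw [Y.eta_symm]; exact Y.mem_nbhd.mp hτ')]

lemma conj_disc_eq_neg_iff (θ : O.K → ℝ) :
    (∀ g : O.K → ℂ,
      (fun τ => (θ τ : ℂ) * Y.disc (fun τ' => (θ τ' : ℂ) * g τ') τ) = fun τ => -Y.disc g τ) ↔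
    ∀ τ τ', Y.eta τ τ' ≠ 0 → θ τ * θ τ' = -1 := by
  classical
  constructor
  · intro hD τ τ' hη
    have hτ' : τ' ∈ Y.nbhd τ := Y.mem_nbhd.mpr hη
    have key := congrFun (hD (Pi.single τ' 1)) τ
    simp only [disc_apply, Pi.single_apply, mul_ite, mul_one, mul_zero,
      Finset.sum_ite_eq', hτ', if_true] at key
    have hne : Y.c τ * ((Y.eta τ τ' : ℂ) * Y.c τ') ≠ 0 :=
      mul_ne_zero (Y.c_ne_zero_of_eta_ne_zero hη)
        (mul_ne_zero (by exact_mod_cast hη)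
          (Y.c_ne_zero_of_eta_ne_zero (by rwa [Y.eta_symm] at hη)))
    have hprod : ((θ τ * θ τ' : ℝ) : ℂ) = -1 := by
      apply mul_right_cancel₀ hne
      push_cast
      linear_combination key
    exact_mod_cast hprod
  · intro hθ g
    funext τ
    have hterm : ∀ τ' ∈ Y.nbhd τ, (θ τ : ℂ) * ((Y.eta τ τ' : ℂ) * (Y.c τ' * ((θ τ' : ℂ) * g τ')))
        = -((Y.eta τ τ' : ℂ) * (Y.c τ' * g τ')) := by
      intro τ' hτ'
      have hp : ((θ τ * θ τ' : ℝ) : ℂ) = -1 := by exact_mod_cast hθ τ τ' (Y.mem_nbhd.mp hτ')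
      push_cast at hp
      linear_combination ((Y.eta τ τ' : ℂ) * Y.c τ' * g τ') * hp
    rw [disc_apply, disc_apply, mul_left_comm, Finset.mul_sum, Finset.sum_congr rfl hterm,
      Finset.sum_neg_distrib, mul_neg]

lemma bipartite_iff_exists_sign_alternating :
    Y.Bipartite ↔ ∃ θ : O.K → ℝ, (∀ τ, θ τ = 1 ∨ θ τ = -1) ∧ (∀ τ, θ (O.bar τ) = θ τ) ∧
      ∀ τ τ', Y.eta τ τ' ≠ 0 → θ τ * θ τ' = -1 := by
  classical
  constructor
  · rintro ⟨A, B, -, hAB, hE⟩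
    have hB_free : ∀ τ ∈ B, ¬ ∃ σ ∈ B, Y.eta τ σ ≠ 0 := fun τ hτ ⟨σ, hσ, hη⟩ => by
      rcases hE τ σ hη with ⟨hA, -⟩ | ⟨-, hA⟩
      · exact (hAB ▸ ⟨hA, hτ⟩ : τ ∈ (∅ : Set O.K))
      · exact (hAB ▸ ⟨hA, hσ⟩ : σ ∈ (∅ : Set O.K))
    refine ⟨fun τ => if ∃ σ ∈ B, Y.eta τ σ ≠ 0 then 1 else -1, fun τ => ?_, fun τ => ?_,
      fun τ τ' hη => ?_⟩
    · dsimp only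
      split_ifs <;> simp
    · simp only [Y.eta_bar_left_ne_zero_iff]
    · rcases hE τ τ' hη with ⟨-, hB⟩ | ⟨hB, -⟩
      · simp [hB_free τ' hB, show ∃ σ ∈ B, Y.eta τ σ ≠ 0 from ⟨τ', hB, hη⟩]
      · simp [hB_free τ hB, show ∃ σ ∈ B, Y.eta τ' σ ≠ 0 from ⟨τ, hB, by rwa [Y.eta_symm]⟩]
  · rintro ⟨θ, hθ, -, halt⟩
    refine ⟨{τ | θ τ = 1}, {τ | θ τ = -1}, ?_, ?_, fun τ τ' hη => ?_⟩
    · ext τ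
      simpa using hθ τ
    · ext τ
      simp only [Set.mem_inter_iff, Set.mem_ofPred_eq, Set.mem_empty_iff_false, iff_false]
      rintro ⟨h1, h2⟩
      linarith
    · have h := halt τ τ' hη
      rcases hθ τ with h1 | h1 <;> rcases hθ τ' with h2 | h2 <;> rw [h1, h2] at h <;>
        norm_num at h <;> simp [h1, h2]

end GroverStructure

lemma exists_eigenvector_neg_of_conj_eq_neg {ι : Type*} (D : (ι → ℂ) → ι → ℂ) (θ : ι → ℝ)
    (hθ : ∀ i, θ i = 1 ∨ θ i = -1)
    (hD : ∀ g : ι → ℂ, (fun i => (θ i : ℂ) * D (fun j => (θ j : ℂ) * g j) i) = fun i => -D g i)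
    {μ : ℂ} (h : ∃ g : ι → ℂ, g ≠ 0 ∧ D g = μ • g) :
    ∃ g : ι → ℂ, g ≠ 0 ∧ D g = (-μ) • g := by
  obtain ⟨g, hg0, hg⟩ := h
  have hsq : ∀ i, (θ i : ℂ) * θ i = 1 := fun i => by rcases hθ i with h | h <;> simp [h]
  refine ⟨fun i => (θ i : ℂ) * g i, fun h0 => hg0 (funext fun i => ?_), funext fun i => ?_⟩
  · have hi := congrArg (fun x => (θ i : ℂ) * x) (congrFun h0 i)
    simpa only [← mul_assoc, hsq i, one_mul, Pi.zero_apply, mul_zero] using hi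
  · have hi := congrArg (fun x => (θ i : ℂ) * x) (congrFun (hD g) i)
    simp only [← mul_assoc, hsq i, one_mul, hg, Pi.smul_apply, smul_eq_mul] at hi
    simp only [hi, Pi.smul_apply, smul_eq_mul]
    ring

theorem switching_iff_bipartite_and_spectral_symmetry_general
    (O : OrientedSet)
    (Y : GroverStructure O) :
    ((∃ θ : O.K → ℝ, (∀ τ, θ τ = 1 ∨ θ τ = -1) ∧ (∀ τ, θ (O.bar τ) = θ τ) ∧
        ∀ g : O.K → ℂ,
          (fun τ => (θ τ : ℂ) * Y.disc (fun τ' => (θ τ' : ℂ) * g τ') τ)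
            = fun τ => - Y.disc g τ) ↔ Y.Bipartite) ∧
    (Y.Bipartite →
      ∀ μ : ℂ, (∃ g : O.K → ℂ, g ≠ 0 ∧ Y.disc g = μ • g) ↔
        (∃ g : O.K → ℂ, g ≠ 0 ∧ Y.disc g = (-μ) • g)) := by
  have hswitch := (exists_congr fun θ => and_congr_right' (and_congr_right'
    (Y.conj_disc_eq_neg_iff θ))).trans Y.bipartite_iff_exists_sign_alternating.symm
  refine ⟨hswitch, fun hbip μ => ?_⟩
  obtain ⟨θ, hθ, -, hD⟩ := hswitch.mpr hbip
  refine ⟨exists_eigenvector_neg_of_conj_eq_neg Y.disc θ hθ hD, fun h => ?_⟩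
  simpa using exists_eigenvector_neg_of_conj_eq_neg Y.disc θ hθ hD h

/-- For a finite complex there is a switching function
`θ : K_q → {±1}` with `θ(τ̄) = θ(τ)` and `S^θ D_q^down S^θ = −D_q^down` if and only if
the down graph `Y_q` is bipartite; consequently, if `Y_q` is bipartite then the set of
eigenvalues of `D_q^down` is symmetric about the origin. -/
theorem switching_iff_bipartite_and_spectral_symmetry
    (O : OrientedSet) [Finite O.K]
    (Y : GroverStructure O) (hYm : Y.mult = 2) :
    ((∃ θ : O.K → ℝ, (∀ τ, θ τ = 1 ∨ θ τ = -1) ∧ (∀ τ, θ (O.bar τ) = θ τ) ∧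
        ∀ g : O.K → ℂ,
          (fun τ => (θ τ : ℂ) * Y.disc (fun τ' => (θ τ' : ℂ) * g τ') τ)
            = fun τ => - Y.disc g τ) ↔ Y.Bipartite) ∧
    (Y.Bipartite →
      ∀ μ : ℂ, (∃ g : O.K → ℂ, g ≠ 0 ∧ Y.disc g = μ • g) ↔
        (∃ g : O.K → ℂ, g ≠ 0 ∧ Y.disc g = (-μ) • g)) :=
  switching_iff_bipartite_and_spectral_symmetry_general O Y
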